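/- Let K be a field, q ∈ K, A a q-generalized flexible algebra over K, V a K-vector space, and l, r : A → End_K(V) two K-linear maps. Then (l, r, V) is a bimodule of A (i.e. for all x,y ∈ A: l_{x·y} − l_x l_y = q·(r_x r_y − r_{y·x}); [r_x, l_y] = q·[r_y, l_x]; and r_x r_y − r_{y·x} = q·(l_{x·y} − l_x l_y)) if and only if the product on the vector space A ⊕ V defined by (x+u) ∗ (y+v) := x·y + l_x(v) + r_y(u), for x, y ∈ A and u, v ∈ V, makes A ⊕ V a q-generalized flexible algebra. -/
import Mathlib


/-- The semidirect product multiplication on `A × V`: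
`(x+u) ∗ (y+v) := x·y + l_x(v) + r_y(u)`. -/
def sdMul {K A V : Type*} [Field K] [AddCommGroup A] [Module K A]
    [AddCommGroup V] [Module K V]
    (mul : A →ₗ[K] A →ₗ[K] A) (l r : A →ₗ[K] Module.End K V) :
    A × V → A × V → A × V :=
  fun p₁ p₂ => (mul p₁.1 p₂.1, l p₁.1 p₂.2 + r p₂.1 p₁.2)

/-- `(l, r, V)` is a bimodule of a `q`-generalized flexible algebra `A`
iff the product `(x+u) ∗ (y+v) := x·y + l_x(v) + r_y(u)` makes `A ⊕ V` a `q`-generalized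
flexible algebra. -/
theorem stmt10 {K A V : Type*} [Field K] [AddCommGroup A] [Module K A]
    [AddCommGroup V] [Module K V]
    (q : K) (mul : A →ₗ[K] A →ₗ[K] A)
    (hflex : ∀ x y z : A,
      mul (mul x y) z - mul x (mul y z) = q • (mul (mul z y) x - mul z (mul y x)))
    (l r : A →ₗ[K] Module.End K V) :
    ((∀ x y : A, l (mul x y) - l x * l y = q • (r x * r y - r (mul y x))) ∧
     (∀ x y : A, r x * l y - l y * r x = q • (r y * l x - l x * r y)) ∧
     (∀ x y : A, r x * r y - r (mul y x) = q • (l (mul x y) - l x * l y)))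
    ↔ (∀ p₁ p₂ p₃ : A × V,
        sdMul mul l r (sdMul mul l r p₁ p₂) p₃ - sdMul mul l r p₁ (sdMul mul l r p₂ p₃)
          = q • (sdMul mul l r (sdMul mul l r p₃ p₂) p₁
              - sdMul mul l r p₃ (sdMul mul l r p₂ p₁))) := by
  constructor
  · rintro ⟨h1, h2, h3⟩ ⟨x, u⟩ ⟨y, v⟩ ⟨z, w⟩
    refine Prod.ext ?_ ?_
    · simpa [sdMul] using hflex x y z
    · simp only [sdMul, Prod.smul_mk, Prod.mk_sub_mk, map_add, smul_add, smul_sub]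
      have ea := DFunLike.congr_fun (h1 x y) w
      have eb' := DFunLike.congr_fun (h2 z x) v
      have ec := DFunLike.congr_fun (h3 z y) u
      simp only [LinearMap.sub_apply, Module.End.mul_apply, LinearMap.smul_apply,
        smul_sub] at ea eb' ec
      linear_combination (norm := abel) ea + eb' + ec
  · intro h
    refine ⟨?_, ?_, ?_⟩
    · intro x y
      ext v
      have := congrArg Prod.snd (h (x, 0) (y, 0) (0, v))
      simpa [sdMul, smul_sub] using this
    · intro x y
      ext v
      have := congrArg Prod.snd (h (y, 0) (0, v) (x, 0))
      simpa [sdMul, smul_sub] using this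
    · intro x y
      ext v
      have := congrArg Prod.snd (h (0, v) (y, 0) (x, 0))
      simpa [sdMul, smul_sub] using this
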